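/- arXiv:2404.09466 — 4 statements merged into one kernel-verified Lean document; each statement's English description precedes it below -/
import Mathlib

section
/- Let Y be a set of non-overlapping closed intervals on {0,...,T-1} with |Y| = M, and let ε > 0. Define the ideal interval scoring matrix S ∈ ℝ^{T×T} by S(i,j) > 0 for all [i,j] ∈ Y and S(i,j) = -ε otherwise. Then rank(S) = M + 1. -/
def NonOverlap (T : ℕ) (Y : Finset (ℕ × ℕ)) : Prop :=
  (∀ p ∈ Y, p.1 < p.2 ∧ p.2 < T) ∧
  (∀ p ∈ Y, ∀ q ∈ Y, p ≠ q → q.2 ≤ p.1 ∨ p.2 ≤ q.1)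

open Matrix Finset

lemma aux_rank_add_le {m n : Type*} [Fintype m] [Fintype n] (A B : Matrix m n ℝ) :
    (A + B).rank ≤ A.rank + B.rank := by
  classical
  rw [Matrix.rank, Matrix.rank, Matrix.rank]
  have h : LinearMap.range (A + B).mulVecLin ≤
      LinearMap.range A.mulVecLin ⊔ LinearMap.range B.mulVecLin := by
    rintro x ⟨v, rfl⟩
    have : (A + B).mulVecLin v = A.mulVecLin v + B.mulVecLin v := by
      simp [Matrix.mulVecLin_add]
    rw [this]
    exact Submodule.add_mem_sup ⟨v, rfl⟩ ⟨v, rfl⟩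
  exact le_trans (Submodule.finrank_mono h)
    (Submodule.finrank_add_le_finrank_add_finrank _ _)

lemma aux_rank_vecMulVec_le {m n : Type*} [Fintype m] [Fintype n]
    (u : m → ℝ) (v : n → ℝ) : (vecMulVec u v).rank ≤ 1 := by
  rw [vecMulVec_eq Unit]
  exact le_trans (Matrix.rank_mul_le_right _ _)
    (le_trans (Matrix.rank_le_card_height _) (by simp))

lemma aux_rank_sum_le {α m n : Type*} [Fintype m] [Fintype n] [DecidableEq α]
    (s : Finset α) (f : α → Matrix m n ℝ) (h : ∀ a ∈ s, (f a).rank ≤ 1) :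
    (∑ a ∈ s, f a).rank ≤ s.card := by
  induction s using Finset.induction_on with
  | empty => simp
  | @insert a s ha ih =>
    rw [Finset.sum_insert ha, Finset.card_insert_of_notMem ha]
    calc (f a + ∑ b ∈ s, f b).rank ≤ (f a).rank + (∑ b ∈ s, f b).rank := aux_rank_add_le _ _
    _ ≤ 1 + s.card := add_le_add (h a (by simp)) (ih fun b hb => h b (by simp [hb]))
    _ = s.card + 1 := by omega

theorem rank_ideal_scoring (T : ℕ) (hT : 0 < T) (Y : Finset (ℕ × ℕ))
    (hY : NonOverlap T Y) (ε : ℝ) (hε : 0 < ε)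
    (S : Matrix (Fin T) (Fin T) ℝ)
    (hpos : ∀ i j : Fin T, ((i : ℕ), (j : ℕ)) ∈ Y → 0 < S i j)
    (hneg : ∀ i j : Fin T, ((i : ℕ), (j : ℕ)) ∉ Y → S i j = -ε) :
    S.rank = Y.card + 1 := by
  classical
  obtain ⟨h1, h2⟩ := hY
  have fstInj : ∀ p ∈ Y, ∀ q ∈ Y, p.1 = q.1 → p = q := by
    intro p hp q hq hpq
    by_contra hne
    have hq1 := (h1 q hq).1
    have hp1 := (h1 p hp).1
    rcases h2 p hp q hq hne with h | h <;> omega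
  have sndInj : ∀ p ∈ Y, ∀ q ∈ Y, p.2 = q.2 → p = q := by
    intro p hp q hq hpq
    by_contra hne
    have hq1 := (h1 q hq).1
    have hp1 := (h1 p hp).1
    rcases h2 p hp q hq hne with h | h <;> omega
  -- upper bound
  have hupper : S.rank ≤ Y.card + 1 := by
    have hdecomp : S = vecMulVec (fun _ : Fin T => -ε) (fun _ : Fin T => (1:ℝ)) +
        ∑ q ∈ Y, Matrix.of (fun i j : Fin T =>
          if ((i : ℕ), (j : ℕ)) = q then S i j + ε else 0) := by
      ext i j
      rw [Matrix.add_apply, Matrix.sum_apply]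
      simp only [Matrix.of_apply, vecMulVec_apply, mul_one]
      rw [Finset.sum_ite_eq Y ((i : ℕ), (j : ℕ)) (fun _ => S i j + ε)]
      by_cases hmem : ((i : ℕ), (j : ℕ)) ∈ Y
      · rw [if_pos hmem]; ring
      · rw [if_neg hmem, hneg i j hmem]; ring
    rw [hdecomp]
    refine le_trans (aux_rank_add_le _ _) ?_
    have hsum : (∑ q ∈ Y, Matrix.of (fun i j : Fin T =>
        if ((i : ℕ), (j : ℕ)) = q then S i j + ε else 0)).rank ≤ Y.card := by
      refine aux_rank_sum_le _ _ ?_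
      intro q hq
      obtain ⟨hq1, hq2⟩ := h1 q hq
      have heq : Matrix.of (fun i j : Fin T =>
          if ((i : ℕ), (j : ℕ)) = q then S i j + ε else 0) =
          vecMulVec (fun i : Fin T => if (i : ℕ) = q.1 then S i ⟨q.2, hq2⟩ + ε else 0)
            (fun j : Fin T => if (j : ℕ) = q.2 then 1 else 0) := by
        ext i j
        simp only [Matrix.of_apply, vecMulVec_apply, Prod.ext_iff]
        by_cases hi : (i : ℕ) = q.1 <;> by_cases hj : (j : ℕ) = q.2 <;>
          simp [hi, hj]
        have : j = ⟨q.2, hq2⟩ := Fin.ext hj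
        rw [this]
      rw [heq]
      exact aux_rank_vecMulVec_le _ _
    calc (vecMulVec (fun _ : Fin T => -ε) (fun _ : Fin T => (1:ℝ))).rank +
          (∑ q ∈ Y, Matrix.of (fun i j : Fin T =>
            if ((i : ℕ), (j : ℕ)) = q then S i j + ε else 0)).rank
        ≤ 1 + Y.card := add_le_add (aux_rank_vecMulVec_le _ _) hsum
      _ = Y.card + 1 := by omega
  -- lower bound
  have hlower : Y.card + 1 ≤ S.rank := by
    set M := Y.card with hM
    have hp : ∀ a : Fin M, ((Y.equivFin.symm a : ℕ × ℕ)) ∈ Y := fun a => (Y.equivFin.symm a).2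
    set p : Fin M → ℕ × ℕ := fun a => (Y.equivFin.symm a : ℕ × ℕ) with hpdef
    have hpinj : Function.Injective p :=
      Subtype.val_injective.comp Y.equivFin.symm.injective
    have hb1 : ∀ a, (p a).1 < (p a).2 := fun a => (h1 _ (hp a)).1
    have hb2 : ∀ a, (p a).2 < T := fun a => (h1 _ (hp a)).2
    have hb0 : ∀ a, (p a).1 < T := fun a => lt_trans (hb1 a) (hb2 a)
    set fi : Fin M → Fin T := fun a => ⟨(p a).1, hb0 a⟩ with hfi
    set fj : Fin M → Fin T := fun a => ⟨(p a).2, hb2 a⟩ with hfj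
    set r : Fin (M + 1) → Fin T := Fin.lastCases ⟨T - 1, by omega⟩ fi with hr
    set c : Fin (M + 1) → Fin T := Fin.lastCases ⟨0, hT⟩ fj with hc
    set d : Fin (M + 1) → ℝ := Fin.lastCases 0 (fun a => S (fi a) (fj a) + ε) with hd
    set P : Matrix (Fin (M + 1)) (Fin T) ℝ :=
      Matrix.of (fun k i => if r k = i then 1 else 0) with hP
    set Q : Matrix (Fin T) (Fin (M + 1)) ℝ :=
      Matrix.of (fun j l => if c l = j then 1 else 0) with hQ
    set B : Matrix (Fin (M + 1)) (Fin (M + 1)) ℝ := P * S * Q with hB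
    have hBapply : ∀ k l, B k l = S (r k) (c l) := by
      intro k l
      have hPS : ∀ j, (P * S) k j = S (r k) j := by
        intro j
        rw [Matrix.mul_apply]
        simp only [hP, Matrix.of_apply, ite_mul, one_mul, zero_mul]
        rw [Finset.sum_ite_eq Finset.univ (r k) (fun i => S i j)]
        simp
      rw [hB, Matrix.mul_apply]
      simp only [hPS, hQ, Matrix.of_apply, mul_ite, mul_one, mul_zero]
      rw [Finset.sum_ite_eq Finset.univ (c l) (fun j => S (r k) j)]
      simp
    -- explicit form of B
    have hBform : ∀ k l, B k l = (if k = l then d k else 0) - ε := by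
      intro k l
      rw [hBapply]
      induction k using Fin.lastCases with
      | last =>
        induction l using Fin.lastCases with
        | last =>
          simp only [hr, hc, hd, Fin.lastCases_last, if_pos rfl]
          have : ((T - 1 : ℕ), (0 : ℕ)) ∉ Y := by
            intro hmem; have := (h1 _ hmem).1; omega
          rw [hneg _ _ this]; simp
        | cast b =>
          have hne : Fin.last M ≠ Fin.castSucc b := (Fin.castSucc_lt_last b).ne'
          simp only [hr, hc, Fin.lastCases_last, Fin.lastCases_castSucc, if_neg hne]
          have : ((T - 1 : ℕ), (p b).2) ∉ Y := by
            intro hmem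
            have := (h1 _ hmem).1
            have := (h1 _ hmem).2
            omega
          rw [hneg _ _ this]; ring
      | cast a =>
        induction l using Fin.lastCases with
        | last =>
          have hne : Fin.castSucc a ≠ Fin.last M := (Fin.castSucc_lt_last a).ne
          simp only [hr, hc, Fin.lastCases_last, Fin.lastCases_castSucc, if_neg hne]
          have : (((p a).1), (0 : ℕ)) ∉ Y := by
            intro hmem; have := (h1 _ hmem).1; omega
          rw [hneg _ _ this]; ring
        | cast b =>
          simp only [hr, hc, hd, Fin.lastCases_castSucc, Fin.castSucc_inj]
          by_cases hab : a = b
          · subst hab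
            simp
          · rw [if_neg hab]
            have : (((p a).1), ((p b).2)) ∉ Y := by
              intro hmem
              have e1 : ((p a).1, (p b).2) = p a :=
                fstInj _ hmem _ (hp a) rfl
              have e2 : ((p a).1, (p b).2) = p b :=
                sndInj _ hmem _ (hp b) rfl
              exact hab (hpinj (e1 ▸ e2 ▸ rfl))
            rw [hneg _ _ this]; ring
    -- B has nonzero determinant
    have hdet : B.det ≠ 0 := by
      intro hdet0
      obtain ⟨v, hv0, hv⟩ := (Matrix.exists_mulVec_eq_zero_iff).mpr hdet0
      set σ : ℝ := ∑ l, v l with hσ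
      have hrow : ∀ k, d k * v k - ε * σ = 0 := by
        intro k
        have hk := congrFun hv k
        rw [Matrix.mulVec, dotProduct] at hk
        simp only [hBform, sub_mul, ite_mul, zero_mul] at hk
        rw [Finset.sum_sub_distrib,
          Finset.sum_ite_eq Finset.univ k (fun l => d k * v l), ← Finset.mul_sum] at hk
        simpa using hk
      have hσ0 : σ = 0 := by
        have := hrow (Fin.last M)
        simp only [hd, Fin.lastCases_last, zero_mul, zero_sub, neg_eq_zero,
          mul_eq_zero] at this
        rcases this with h | h
        · exact absurd h hε.ne'
        · exact h
      have hcast : ∀ a : Fin M, v (Fin.castSucc a) = 0 := by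
        intro a
        have := hrow (Fin.castSucc a)
        rw [hσ0, mul_zero, sub_zero, mul_eq_zero] at this
        rcases this with h | h
        · exfalso
          have hSpos : 0 < S (fi a) (fj a) := by
            apply hpos
            have : (((fi a : Fin T) : ℕ), ((fj a : Fin T) : ℕ)) = p a := rfl
            rw [this]
            exact hp a
          have : d (Fin.castSucc a) = S (fi a) (fj a) + ε := by
            simp [hd]
          rw [this] at h
          linarith
        · exact h
      have hlast : v (Fin.last M) = 0 := by
        have : σ = v (Fin.last M) := by
          rw [hσ, Fin.sum_univ_castSucc]
          simp [hcast]
        rw [← this, hσ0]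
      apply hv0
      funext k
      induction k using Fin.lastCases with
      | last => exact hlast
      | cast a => exact hcast a
    have hBunit : IsUnit B := (Matrix.isUnit_iff_isUnit_det B).mpr (isUnit_iff_ne_zero.mpr hdet)
    have hBrank : B.rank = M + 1 := by
      rw [Matrix.rank_of_isUnit B hBunit, Fintype.card_fin]
    calc Y.card + 1 = B.rank := hBrank.symm
      _ ≤ (P * S).rank := Matrix.rank_mul_le_left _ _
      _ ≤ S.rank := Matrix.rank_mul_le_right _ _
  omega
end

section
/- Let Y be a set of non-overlapping closed intervals on {0,...,T-1} with |Y| = M, ε > 0, and let S be an ideal interval scoring matrix for Y. If D ≥ M + 1, then there exist vectors q_0,...,q_{T-1} ∈ ℝ^D and k_0,...,k_{T-1} ∈ ℝ^D such that S(i,j) = ⟨q_i, k_j⟩ for all i,j. -/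
open Matrix

open Function

theorem Function.Injective.extend_zero_dotProduct_extend_zero {κ ι R : Type*} [Fintype κ]
    [Fintype ι] [NonUnitalNonAssocSemiring R] {f : κ → ι} (hf : Injective f) (u v : κ → R) :
    extend f u 0 ⬝ᵥ extend f v 0 = u ⬝ᵥ v := by
  refine (Fintype.sum_of_injective f hf _ _ (fun d hd => ?_) fun a => ?_).symm
  · simp [extend_apply' _ _ _ hd]
  · simp [hf.extend_apply]

namespace Matrix

variable {m n R : Type*}

theorem exists_dotProduct_eq_of_eq_const_off [CommRing R] [DecidableEq m] [DecidableEq n]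
    (S : Matrix m n R) (P : Finset (m × n)) (c : R) (hS : ∀ i j, (i, j) ∉ P → S i j = c) :
    ∃ (q : m → Option P → R) (k : n → Option P → R), ∀ i j, S i j = q i ⬝ᵥ k j := by
  refine ⟨fun i => Option.elim' c fun p => if p.1.1 = i then S p.1.1 p.1.2 - c else 0,
    fun j => Option.elim' 1 fun p => if p.1.2 = j then 1 else 0, fun i j => ?_⟩
  have hterm : ∀ p : m × n, ((if p.1 = i then S p.1 p.2 - c else 0) *
      if p.2 = j then 1 else 0) = if p = (i, j) then S p.1 p.2 - c else 0 := by
    intro p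
    simp only [ite_zero_mul_ite_zero, mul_one, Prod.ext_iff]
  simp only [dotProduct, Fintype.sum_option, Option.elim', mul_one]
  rw [Finset.sum_coe_sort P (fun p : m × n => (if p.1 = i then S p.1 p.2 - c else 0) *
      if p.2 = j then 1 else 0), Finset.sum_congr rfl fun p _ => hterm p, Finset.sum_ite_eq']
  by_cases hij : (i, j) ∈ P
  · simp [hij]
  · simp [hij, hS i j hij]

theorem exists_dotProduct_eq_of_card_le {κ ι : Type*} [Fintype κ] [Fintype ι]
    [NonUnitalNonAssocSemiring R] {S : Matrix m n R} {q : m → κ → R} {k : n → κ → R}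
    (hS : ∀ i j, S i j = q i ⬝ᵥ k j) (hcard : Fintype.card κ ≤ Fintype.card ι) :
    ∃ (q' : m → ι → R) (k' : n → ι → R), ∀ i j, S i j = q' i ⬝ᵥ k' j := by
  obtain ⟨f⟩ := Function.Embedding.nonempty_of_card_le hcard
  exact ⟨fun i => extend f (q i) 0, fun j => extend f (k j) 0, fun i j => by
    rw [f.injective.extend_zero_dotProduct_extend_zero, hS]⟩

end Matrix

theorem ideal_scoring_inner_product_representation_general (T D : ℕ)
    (Y : Finset (ℕ × ℕ)) (ε : ℝ)
    (S : Matrix (Fin T) (Fin T) ℝ)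
    (hneg : ∀ i j : Fin T, ((i : ℕ), (j : ℕ)) ∉ Y → S i j = -ε)
    (hD : Y.card + 1 ≤ D) :
    ∃ q k : Fin T → Fin D → ℝ, ∀ i j : Fin T, S i j = q i ⬝ᵥ k j := by
  classical
  let P := Finset.univ.filter fun p : Fin T × Fin T => ((p.1 : ℕ), (p.2 : ℕ)) ∈ Y
  have hPY : P.card ≤ Y.card :=
    Finset.card_le_card_of_injOn (fun p => ((p.1 : ℕ), (p.2 : ℕ)))
      (fun p hp => by simpa [P] using hp) fun p _ p' _ h => by
        simpa [Prod.ext_iff, Fin.val_inj] using h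
  obtain ⟨q, k, hqk⟩ := S.exists_dotProduct_eq_of_eq_const_off P (-ε) fun i j hij =>
    hneg i j (by simpa [P] using hij)
  refine exists_dotProduct_eq_of_card_le hqk ?_
  rw [Fintype.card_option, Fintype.card_coe, Fintype.card_fin]
  omega

theorem ideal_scoring_inner_product_representation (T D : ℕ)
    (Y : Finset (ℕ × ℕ)) (hY : NonOverlap T Y) (ε : ℝ) (hε : 0 < ε)
    (S : Matrix (Fin T) (Fin T) ℝ)
    (hpos : ∀ i j : Fin T, ((i : ℕ), (j : ℕ)) ∈ Y → 0 < S i j)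
    (hneg : ∀ i j : Fin T, ((i : ℕ), (j : ℕ)) ∉ Y → S i j = -ε)
    (hD : Y.card + 1 ≤ D) :
    ∃ q k : Fin T → Fin D → ℝ, ∀ i j : Fin T, S i j = q i ⬝ᵥ k j :=
  ideal_scoring_inner_product_representation_general T D Y ε S hneg hD
end

section
/- Let Y be a set of non-overlapping closed intervals on {0,...,T-1} with |Y| = M, and S an ideal interval scoring matrix for Y. If S(i,j) = ⟨q_i, k_j⟩ for vectors q_i, k_j ∈ ℝ^D, then the matrices Q = [q_0,...,q_{T-1}] and K = [k_0,...,k_{T-1}] both have rank at least M+1; in particular D ≥ M+1. -/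
open Matrix

theorem inner_product_rank_lower_bound (T D : ℕ) (hT : 0 < T)
    (Y : Finset (ℕ × ℕ)) (hY : NonOverlap T Y) (ε : ℝ) (hε : 0 < ε)
    (S : Matrix (Fin T) (Fin T) ℝ)
    (hpos : ∀ i j : Fin T, ((i : ℕ), (j : ℕ)) ∈ Y → 0 < S i j)
    (hneg : ∀ i j : Fin T, ((i : ℕ), (j : ℕ)) ∉ Y → S i j = -ε)
    (q k : Fin T → Fin D → ℝ)
    (hrep : ∀ i j : Fin T, S i j = q i ⬝ᵥ k j) :
    Y.card + 1 ≤ (Matrix.of fun d t => q t d : Matrix (Fin D) (Fin T) ℝ).rank ∧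
    Y.card + 1 ≤ (Matrix.of fun d t => k t d : Matrix (Fin D) (Fin T) ℝ).rank ∧
    Y.card + 1 ≤ D := by
  obtain ⟨hmem, hsep⟩ := hY
  -- uniqueness key lemma
  have key : ∀ w ∈ Y, ∀ w' ∈ Y, (w.1, w'.2) ∈ Y → w = w' := by
    intro w hw w' hw' hm
    have h1 : (w.1, w'.2) = w := by
      by_contra hne
      rcases hsep _ hm _ hw hne with h | h
      · exact absurd h (not_le.2 (hmem w hw).1)
      · exact absurd h (not_le.2 (hmem _ hm).1)
    have h2 : w'.2 = w.2 := by have := congrArg Prod.snd h1; simpa using this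
    by_contra hne
    rcases hsep _ hw _ hw' hne with h | h
    · rw [h2] at h; exact absurd h (not_le.2 (hmem w hw).1)
    · rw [← h2] at h; exact absurd h (not_le.2 (hmem w' hw').1)
  -- choose a "fresh" column index c and row index r
  set c : ℕ := if hne : Y.Nonempty then (Y.image Prod.fst).min' (hne.image _) else 0
    with hc
  set r : ℕ := if hne : Y.Nonempty then (Y.image Prod.snd).max' (hne.image _) else 0
    with hr
  have hcle : ∀ w ∈ Y, c ≤ w.1 := by
    intro w hw
    rw [hc, dif_pos ⟨w, hw⟩]
    exact Finset.min'_le _ _ (Finset.mem_image_of_mem _ hw)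
  have hrle : ∀ w ∈ Y, w.2 ≤ r := by
    intro w hw
    rw [hr, dif_pos ⟨w, hw⟩]
    exact Finset.le_max' _ _ (Finset.mem_image_of_mem _ hw)
  have hcT : c < T := by
    rw [hc]
    split
    · rename_i hne
      obtain ⟨x, hx, hxe⟩ := Finset.mem_image.1 (Finset.min'_mem (Y.image Prod.fst)
        (hne.image _))
      rw [← hxe]
      exact lt_trans (hmem x hx).1 (hmem x hx).2
    · exact hT
  have hrT : r < T := by
    rw [hr]
    split
    · rename_i hne
      obtain ⟨x, hx, hxe⟩ := Finset.mem_image.1 (Finset.max'_mem (Y.image Prod.snd)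
        (hne.image _))
      rw [← hxe]
      exact (hmem x hx).2
    · exact hT
  have hnc : ∀ x : ℕ, (x, c) ∉ Y := by
    intro x hx
    have h1 : c ≤ x := hcle _ hx
    have h2 : x < c := (hmem _ hx).1
    omega
  have hnr : ∀ y : ℕ, (r, y) ∉ Y := by
    intro y hy
    have h1 : y ≤ r := hrle _ hy
    have h2 : r < y := (hmem _ hy).1
    omega
  -- the family of columns
  let ι := Option {p : ℕ × ℕ // p ∈ Y}
  let col : ι → Fin T := fun j => match j with
    | none => ⟨c, hcT⟩
    | some w => ⟨w.1.2, (hmem w.1 w.2).2⟩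
  let v : ι → (Fin T → ℝ) := fun j => Sᵀ (col j)
  have hv : LinearIndependent ℝ v := by
    rw [Fintype.linearIndependent_iff]
    intro g hg
    have hrow : ∀ i : Fin T, ∑ j : ι, g j * S i (col j) = 0 := by
      intro i
      have h := congrFun hg i
      simpa [v, Finset.sum_apply, Matrix.transpose_apply] using h
    -- row r gives that the sum of coefficients is 0
    have hsigma : ∑ j : ι, g j = 0 := by
      have h0 := hrow ⟨r, hrT⟩
      have hall : ∀ j : ι, S ⟨r, hrT⟩ (col j) = -ε := by
        intro j
        match j with
        | none => exact hneg _ _ (hnr c)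
        | some w => exact hneg _ _ (hnr w.1.2)
      rw [Finset.sum_congr rfl (fun j _ => by rw [hall j]), ← Finset.sum_mul] at h0
      rcases mul_eq_zero.1 h0 with h | h
      · exact h
      · exact absurd h (by simp [ne_of_gt hε])
    have hsome : ∀ w : {p : ℕ × ℕ // p ∈ Y}, g (some w) = 0 := by
      intro w
      have hi : (w.1.1 : ℕ) < T := lt_trans (hmem w.1 w.2).1 (hmem w.1 w.2).2
      set i : Fin T := ⟨w.1.1, hi⟩ with hidef
      have hterm : ∀ j : ι,
          S i (col j) = (if j = some w then S i (col (some w)) + ε else 0) + (-ε) := by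
        intro j
        match j with
        | none =>
          rw [if_neg (by simp)]
          have := hneg i (col none) (hnc w.1.1)
          simpa using this
        | some w' =>
          by_cases hww : w' = w
          · subst hww; simp
          · rw [if_neg (show ¬(some w' = some w) from
              fun hcon => hww (Option.some_injective _ hcon))]
            have hnm : ((w.1).1, (w'.1).2) ∉ Y := fun hmm =>
              hww (Subtype.ext (key _ w.2 _ w'.2 hmm).symm)
            have := hneg i (col (some w')) hnm
            simpa using this
      have h0 := hrow i
      have hexp : ∀ j : ι, g j * ((if j = some w then S i (col (some w)) + ε else 0) + (-ε))
          = (if j = some w then g j * (S i (col (some w)) + ε) else 0) + g j * (-ε) := by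
        intro j; by_cases h : j = some w <;> simp [h, mul_add]
      rw [Finset.sum_congr rfl (fun j _ => by rw [hterm j]),
        Finset.sum_congr rfl (fun j _ => hexp j), Finset.sum_add_distrib,
        Finset.sum_ite_eq' Finset.univ (some w), ← Finset.sum_mul, hsigma] at h0
      simp only [Finset.mem_univ, if_true, zero_mul, add_zero] at h0
      have hSpos : 0 < S i (col (some w)) + ε := by
        have := hpos i (col (some w)) w.2
        linarith
      rcases mul_eq_zero.1 h0 with h | h
      · exact h
      · exact absurd h (ne_of_gt hSpos)
    intro j
    match j with
    | some w => exact hsome w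
    | none =>
      have := hsigma
      rw [Fintype.sum_option] at this
      simpa [hsome] using this
  -- rank of S is at least card Y + 1
  have hcard : Fintype.card ι = Y.card + 1 := by
    simp [ι, Fintype.card_option]
  have hS : Y.card + 1 ≤ S.rank := by
    rw [Matrix.rank_eq_finrank_span_cols, ← hcard,
      ← finrank_span_eq_card hv]
    exact Submodule.finrank_mono (Submodule.span_mono
      (Set.range_comp_subset_range col Sᵀ))
  -- factor S
  have hfact : S = (Matrix.of fun d t => q t d : Matrix (Fin D) (Fin T) ℝ)ᵀ *
      (Matrix.of fun d t => k t d : Matrix (Fin D) (Fin T) ℝ) := by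
    ext i j
    simp [Matrix.mul_apply, hrep i j, dotProduct]
  have hQ : Y.card + 1 ≤ (Matrix.of fun d t => q t d : Matrix (Fin D) (Fin T) ℝ).rank := by
    calc Y.card + 1 ≤ S.rank := hS
    _ ≤ ((Matrix.of fun d t => q t d : Matrix (Fin D) (Fin T) ℝ)ᵀ).rank := by
        rw [hfact]; exact Matrix.rank_mul_le_left _ _
    _ = _ := Matrix.rank_transpose _
  have hK : Y.card + 1 ≤ (Matrix.of fun d t => k t d : Matrix (Fin D) (Fin T) ℝ).rank := by
    calc Y.card + 1 ≤ S.rank := hS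
    _ ≤ _ := by rw [hfact]; exact Matrix.rank_mul_le_right _ _
  exact ⟨hQ, hK, le_trans hQ ((Matrix.rank_le_card_height _).trans (Fintype.card_fin D).le)⟩
end

section
/- Let Y be a set of non-overlapping closed intervals on {0,...,T-1}, with |Y| = M, and let ε > 0. Let S be an ideal interval scoring matrix for Y and S' the matrix obtained by subtracting the first column of S from every column of S. Then S'(i,j) > ε for [i,j] ∈ Y with j ≠ 0, S'(i,j) = 0 otherwise, and rank(S) = rank(S') + 1. -/
namespace Matrix

variable {m n : Type*} [Fintype n]

theorem add_vecMulVec_mulVec {R : Type*} [CommSemiring R] (B : Matrix m n R) (u : m → R)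
    (w : n → R) (x : n → R) :
    (B + vecMulVec u w) *ᵥ x = B *ᵥ x + (w ⬝ᵥ x) • u := by
  rw [add_mulVec, vecMulVec_mulVec, op_smul_eq_smul]

theorem notMem_range_mulVecLin_of_row_eq_zero {R : Type*} [CommSemiring R]
    {B : Matrix m n R} {u : m → R} {i : m}
    (hBi : B i = 0) (hui : u i ≠ 0) : u ∉ LinearMap.range B.mulVecLin := by
  rintro ⟨x, rfl⟩
  exact hui (by simp [mulVec, hBi])

theorem range_add_vecMulVec_mulVecLin {R : Type*} [CommRing R] {B : Matrix m n R} {u : m → R}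
    (w : n → R) (hA : u ∈ LinearMap.range (B + vecMulVec u w).mulVecLin) :
    LinearMap.range (B + vecMulVec u w).mulVecLin =
      LinearMap.range B.mulVecLin ⊔ Submodule.span R {u} := by
  apply le_antisymm
  · rintro _ ⟨x, rfl⟩
    rw [mulVecLin_apply, add_vecMulVec_mulVec]
    exact Submodule.add_mem_sup (LinearMap.mem_range_self _ x)
      (Submodule.smul_mem _ _ (Submodule.mem_span_singleton_self u))
  · refine sup_le ?_ ((Submodule.span_singleton_le_iff_mem _ _).mpr hA)
    rintro _ ⟨x, rfl⟩
    have hBx : B *ᵥ x = (B + vecMulVec u w) *ᵥ x - (w ⬝ᵥ x) • u := by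
      rw [add_vecMulVec_mulVec, add_sub_cancel_right]
    rw [mulVecLin_apply, hBx]
    exact Submodule.sub_mem _ (LinearMap.mem_range_self _ x) (Submodule.smul_mem _ _ hA)

theorem rank_add_vecMulVec {K : Type*} [Field K] [Finite m] {B : Matrix m n K} {u : m → K}
    (w : n → K)
    (hA : u ∈ LinearMap.range (B + vecMulVec u w).mulVecLin)
    (hB : u ∉ LinearMap.range B.mulVecLin) :
    (B + vecMulVec u w).rank = B.rank + 1 := by
  rw [rank, range_add_vecMulVec_mulVecLin w hA, Submodule.finrank_sup_span_singleton hB, rank]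

end Matrix

namespace NonOverlap

variable {T : ℕ} {Y : Finset (ℕ × ℕ)}

theorem no_interval_ends_at_zero (hY : NonOverlap T Y) (i : ℕ) : (i, 0) ∉ Y := fun h => by
  have := (hY.1 _ h).1
  omega

theorem no_interval_starts_at_last (hY : NonOverlap T Y) (j : ℕ) : (T - 1, j) ∉ Y := fun h => by
  have := hY.1 _ h
  omega

end NonOverlap

theorem column_subtraction_rank (T : ℕ) (hT : 0 < T) (Y : Finset (ℕ × ℕ))
    (hY : NonOverlap T Y) (ε : ℝ) (hε : 0 < ε)
    (S : Matrix (Fin T) (Fin T) ℝ)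
    (hpos : ∀ i j : Fin T, ((i : ℕ), (j : ℕ)) ∈ Y → 0 < S i j)
    (hneg : ∀ i j : Fin T, ((i : ℕ), (j : ℕ)) ∉ Y → S i j = -ε) :
    ∀ S' : Matrix (Fin T) (Fin T) ℝ,
      (∀ i j : Fin T, S' i j = S i j - S i ⟨0, hT⟩) →
      (∀ i j : Fin T, ((i : ℕ), (j : ℕ)) ∈ Y → (j : ℕ) ≠ 0 → ε < S' i j) ∧
      (∀ i j : Fin T, ((i : ℕ), (j : ℕ)) ∉ Y ∨ (j : ℕ) = 0 → S' i j = 0) ∧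
      S.rank = S'.rank + 1 := by
  intro S' hS'
  have hcol0 (i : Fin T) : S i ⟨0, hT⟩ = -ε := hneg _ _ (hY.no_interval_ends_at_zero i)
  have hS'_zero (i j : Fin T) (hij : ((i : ℕ), (j : ℕ)) ∉ Y) : S' i j = 0 := by
    rw [hS', hcol0, hneg i j hij, sub_self]
  have hS : S = S' + Matrix.vecMulVec 1 (fun _ => -ε) := by
    ext i j
    simp [hS', hcol0]
  refine ⟨fun i j hij _ => ?_, ?_, ?_⟩
  · linarith [hS' i j, hcol0 i, hpos i j hij]
  · rintro i j (hij | hj)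
    · exact hS'_zero i j hij
    · exact hS'_zero i j (hj ▸ hY.no_interval_ends_at_zero i)
  · rw [hS]
    apply Matrix.rank_add_vecMulVec
    · refine ⟨Pi.single ⟨0, hT⟩ (-ε⁻¹), funext fun i => ?_⟩
      rw [← hS, Matrix.mulVecLin_apply, Matrix.mulVec_single]
      simp [hcol0, hε.ne']
    · exact Matrix.notMem_range_mulVecLin_of_row_eq_zero (i := ⟨T - 1, by omega⟩)
        (funext fun j => hS'_zero _ j (hY.no_interval_starts_at_last j)) one_ne_zero
end
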